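/- Let G be a group with finite symmetric generating set S whose word metric d_S is δ-hyperbolic (δ ≥ 0). Then for every finite subgroup H of G there exists x ∈ G whose orbit has small diameter: d(Hx) ≤ 8δ + 4. -/
import Mathlib


/-- The word metric on a group `G` with respect to a generating set `S`:
`wordDist S x y` is the least `n` such that `x⁻¹ * y` is a product of `n` elements of `S`. -/
noncomputable def wordDist {G : Type*} [Group G] (S : Set G) (x y : G) : ℕ :=
  sInf {n : ℕ | ∃ l : List G, (∀ s ∈ l, s ∈ S) ∧ l.length = n ∧ x⁻¹ * y = l.prod}

/-- A distance function `d` on `X` is `δ`-hyperbolic if for all `x,y,z,t` one has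
`d x y + d z t ≤ max (d x z + d y t) (d x t + d y z) + 2δ`. -/
def IsHyperbolicDist {X : Type*} (d : X → X → ℝ) (δ : ℝ) : Prop :=
  ∀ x y z t : X, d x y + d z t ≤ max (d x z + d y t) (d x t + d y z) + 2 * δ

/-- The orbit `Hx = {h * x : h ∈ H}` of a point `x` under a subgroup `H`. -/
def orb {G : Type*} [Group G] (H : Subgroup G) (x : G) : Set G :=
  (fun h => h * x) '' (H : Set G)

/-- `setD S K L = max_{k ∈ K, l ∈ L} d_S(k,l)`, the maximal word-metric distance between
the (finite) sets `K` and `L`.  `setD S K K` is the diameter of `K`. -/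
noncomputable def setD {G : Type*} [Group G] (S : Set G) (K L : Set G) : ℕ :=
  sSup {n : ℕ | ∃ k ∈ K, ∃ l ∈ L, wordDist S k l = n}


section Helpers

variable {G : Type*} [Group G] {S : Set G}

lemma exists_word (hsymm : S⁻¹ = S) (hgen : Subgroup.closure S = ⊤) (g : G) :
    ∃ l : List G, (∀ s ∈ l, s ∈ S) ∧ g = l.prod := by
  have hg : g ∈ (Subgroup.closure S).toSubmonoid := by
    rw [hgen]; trivial
  rw [Subgroup.closure_toSubmonoid, hsymm, Set.union_self] at hg
  obtain ⟨l, h1, h2⟩ := Submonoid.exists_list_of_mem_closure hg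
  exact ⟨l, h1, h2.symm⟩

lemma wordDist_set_nonempty (hsymm : S⁻¹ = S) (hgen : Subgroup.closure S = ⊤) (x y : G) :
    {n : ℕ | ∃ l : List G, (∀ s ∈ l, s ∈ S) ∧ l.length = n ∧ x⁻¹ * y = l.prod}.Nonempty := by
  obtain ⟨l, h1, h2⟩ := exists_word hsymm hgen (x⁻¹ * y)
  exact ⟨l.length, l, h1, rfl, h2⟩

lemma wordDist_le {x y : G} {l : List G} (h1 : ∀ s ∈ l, s ∈ S) (h2 : x⁻¹ * y = l.prod) :
    wordDist S x y ≤ l.length :=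
  Nat.sInf_le ⟨l, h1, rfl, h2⟩

lemma wordDist_spec (hsymm : S⁻¹ = S) (hgen : Subgroup.closure S = ⊤) (x y : G) :
    ∃ l : List G, (∀ s ∈ l, s ∈ S) ∧ l.length = wordDist S x y ∧ x⁻¹ * y = l.prod :=
  Nat.sInf_mem (wordDist_set_nonempty hsymm hgen x y)

lemma wordDist_mul_left (g x y : G) : wordDist S (g * x) (g * y) = wordDist S x y := by
  unfold wordDist
  congr 1
  ext n
  simp [mul_assoc]

lemma wordDist_symm_le (hsymm : S⁻¹ = S) (hgen : Subgroup.closure S = ⊤) (x y : G) :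
    wordDist S y x ≤ wordDist S x y := by
  obtain ⟨l, h1, h2, h3⟩ := wordDist_spec hsymm hgen x y
  have hprod : y⁻¹ * x = ((l.map fun s => s⁻¹).reverse).prod := by
    rw [← List.prod_inv_reverse, ← h3]; group
  calc wordDist S y x ≤ ((l.map fun s => s⁻¹).reverse).length := by
        refine wordDist_le ?_ hprod
        intro s hs
        rw [List.mem_reverse, List.mem_map] at hs
        obtain ⟨t, ht, rfl⟩ := hs
        rw [← hsymm]
        simpa using h1 t ht
    _ = wordDist S x y := by simp [h2]

lemma wordDist_symm (hsymm : S⁻¹ = S) (hgen : Subgroup.closure S = ⊤) (x y : G) :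
    wordDist S x y = wordDist S y x :=
  le_antisymm (wordDist_symm_le hsymm hgen y x) (wordDist_symm_le hsymm hgen x y)

lemma exists_mid (hsymm : S⁻¹ = S) (hgen : Subgroup.closure S = ⊤) (x y : G) (k : ℕ) :
    ∃ m : G, wordDist S x m ≤ k ∧ wordDist S m y ≤ wordDist S x y - k := by
  obtain ⟨l, h1, h2, h3⟩ := wordDist_spec hsymm hgen x y
  refine ⟨x * (l.take k).prod, ?_, ?_⟩
  · have : x⁻¹ * (x * (l.take k).prod) = (l.take k).prod := by group
    calc wordDist S x (x * (l.take k).prod) ≤ (l.take k).length :=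
          wordDist_le (fun s hs => h1 s (List.mem_of_mem_take hs)) this
      _ ≤ k := by simp
  · have : (x * (l.take k).prod)⁻¹ * y = (l.drop k).prod := by
      have hxy : x⁻¹ * y = (l.take k).prod * (l.drop k).prod := by
        rw [h3, ← List.prod_append, List.take_append_drop]
      rw [mul_inv_rev, mul_assoc, hxy]; group
    calc wordDist S (x * (l.take k).prod) y ≤ (l.drop k).length :=
          wordDist_le (fun s hs => h1 s (List.mem_of_mem_drop hs)) this
      _ = wordDist S x y - k := by simp [h2]

end Helpers

/-- In a δ-hyperbolic group, every finite subgroup has an orbit of diameter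
at most `8δ + 4`. -/
theorem exists_small_orbit
    {G : Type*} [Group G] (S : Set G) (hfin : S.Finite) (hsymm : S⁻¹ = S)
    (hone : (1 : G) ∉ S) (hgen : Subgroup.closure S = ⊤)
    (δ : ℝ) (hδ : 0 ≤ δ)
    (hhyp : IsHyperbolicDist (fun x y => (wordDist S x y : ℝ)) δ)
    (H : Subgroup G) (hH : ((H : Subgroup G) : Set G).Finite) :
    ∃ x : G, (setD S (orb H x) (orb H x) : ℝ) ≤ 8 * δ + 4 := by
  classical
  have horbfin : ∀ y : G, (orb H y).Finite := fun y => hH.image _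
  have hymem : ∀ y : G, y ∈ orb H y := fun y => ⟨1, H.one_mem, one_mul y⟩
  have hkmem : ∀ (k y : G), k ∈ H → k * y ∈ orb H y := fun k y hk => ⟨k, hk, rfl⟩
  set T : G → Set ℕ := fun y => {n | ∃ a ∈ orb H y, ∃ b ∈ orb H y, wordDist S a b = n}
    with hTdef
  have hTfin : ∀ y, (T y).Finite := by
    intro y
    have : T y = Set.image2 (wordDist S) (orb H y) (orb H y) := by
      ext n
      simp [hTdef, Set.mem_image2]
    rw [this]
    exact Set.Finite.image2 _ (horbfin y) (horbfin y)
  have hTne : ∀ y, (T y).Nonempty := fun y =>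
    ⟨wordDist S y y, y, hymem y, y, hymem y, rfl⟩
  have hsetD : ∀ y, setD S (orb H y) (orb H y) = sSup (T y) := fun y => rfl
  set R : Set ℕ := {n | ∃ y : G, setD S (orb H y) (orb H y) = n} with hRdef
  have hRne : R.Nonempty := ⟨_, 1, rfl⟩
  set r := sInf R with hrdef
  obtain ⟨x, hx⟩ : r ∈ R := Nat.sInf_mem hRne
  refine ⟨x, ?_⟩
  rw [hx]
  -- bound pairs in orbit of x by r
  have hpair : ∀ a ∈ orb H x, ∀ b ∈ orb H x, wordDist S a b ≤ r := by
    intro a ha b hb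
    rw [← hx, hsetD]
    exact le_csSup ((hTfin x).bddAbove) ⟨a, ha, b, hb, rfl⟩
  -- r is attained
  have hrT : r ∈ T x := by
    rw [← hx, hsetD]
    exact Nat.sSup_mem (hTne x) (hTfin x).bddAbove
  obtain ⟨a, ⟨k1, hk1, rfl⟩, b, ⟨k2, hk2, rfl⟩, hab⟩ := hrT
  set h : G := k1⁻¹ * k2 with hhdef
  have hhH : h ∈ H := H.mul_mem (H.inv_mem hk1) hk2
  have hr : wordDist S x (h * x) = r := by
    rw [← wordDist_mul_left k1 x (h * x)] at *
    rw [← hab]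
    congr 1
    rw [hhdef]; group
  set c : ℕ := (r + 1) / 2 with hcdef
  obtain ⟨m, hm1, hm2⟩ := exists_mid hsymm hgen x (h * x) c
  rw [hr] at hm2
  have hm2' : wordDist S m (h * x) ≤ c := le_trans hm2 (by omega)
  have hmx : wordDist S m x ≤ c := by
    rw [wordDist_symm hsymm hgen]; exact hm1
  -- hyperbolicity steps
  have key : ∀ k : G, k ∈ H → (wordDist S m (k * m) : ℝ) ≤ 4 * δ + 1 := by
    intro k hk
    have khxmem : k * (h * x) ∈ orb H x := ⟨k * h, H.mul_mem hk hhH, by group⟩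
    have b1 : wordDist S x (k * x) ≤ r := hpair _ (hymem x) _ (hkmem k x hk)
    have b2 : wordDist S x (k * (h * x)) ≤ r := hpair _ (hymem x) _ khxmem
    have b3 : wordDist S (h * x) (k * x) ≤ r :=
      hpair _ (hkmem h x hhH) _ (hkmem k x hk)
    have b4 : wordDist S (h * x) (k * (h * x)) ≤ r := hpair _ (hkmem h x hhH) _ khxmem
    have e1 : wordDist S (k * x) (k * (h * x)) = r := by rw [wordDist_mul_left]; exact hr
    have e2 : wordDist S (k * m) (k * (h * x)) = wordDist S m (h * x) :=
      wordDist_mul_left k m (h * x)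
    have e3 : wordDist S (k * m) (k * x) = wordDist S m x := wordDist_mul_left k m x
    -- step 1 : d(x, km) ≤ c + 2δ
    have c1 : (wordDist S x (k * m) : ℝ) ≤ c + 2 * δ := by
      have hh := hhyp x (k * m) (k * x) (k * (h * x))
      simp only [e1, e2, e3] at hh
      have m1 : (wordDist S x (k * x) : ℝ) + wordDist S m (h * x) ≤ r + c := by
        linarith [(Nat.cast_le (α := ℝ)).mpr b1, (Nat.cast_le (α := ℝ)).mpr hm2']
      have m2 : (wordDist S x (k * (h * x)) : ℝ) + wordDist S m x ≤ r + c := by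
        linarith [(Nat.cast_le (α := ℝ)).mpr b2, (Nat.cast_le (α := ℝ)).mpr hmx]
      have := max_le m1 m2
      linarith [hh, this]
    -- step 1' : d(hx, km) ≤ c + 2δ
    have c2 : (wordDist S (h * x) (k * m) : ℝ) ≤ c + 2 * δ := by
      have hh := hhyp (h * x) (k * m) (k * x) (k * (h * x))
      simp only [e1, e2, e3] at hh
      have m1 : (wordDist S (h * x) (k * x) : ℝ) + wordDist S m (h * x) ≤ r + c := by
        linarith [(Nat.cast_le (α := ℝ)).mpr b3, (Nat.cast_le (α := ℝ)).mpr hm2']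
      have m2 : (wordDist S (h * x) (k * (h * x)) : ℝ) + wordDist S m x ≤ r + c := by
        linarith [(Nat.cast_le (α := ℝ)).mpr b4, (Nat.cast_le (α := ℝ)).mpr hmx]
      have := max_le m1 m2
      linarith [hh, this]
    -- step 2
    have hh := hhyp m (k * m) x (h * x)
    simp only [hr] at hh
    have s1 : wordDist S (k * m) (h * x) = wordDist S (h * x) (k * m) :=
      wordDist_symm hsymm hgen _ _
    have s2 : wordDist S (k * m) x = wordDist S x (k * m) :=
      wordDist_symm hsymm hgen _ _
    simp only [s1, s2] at hh
    have m1 : (wordDist S m x : ℝ) + wordDist S (h * x) (k * m) ≤ c + (c + 2 * δ) := by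
      linarith [(Nat.cast_le (α := ℝ)).mpr hmx, c2]
    have m2 : (wordDist S m (h * x) : ℝ) + wordDist S x (k * m) ≤ c + (c + 2 * δ) := by
      linarith [(Nat.cast_le (α := ℝ)).mpr hm2', c1]
    have hmax := max_le m1 m2
    have h2c : (c : ℝ) + c ≤ r + 1 := by
      have : c + c ≤ r + 1 := by omega
      exact_mod_cast this
    linarith [hh, hmax]
  -- conclude: diameter of orbit of m small, minimality
  set N := setD S (orb H m) (orb H m) with hNdef
  have hNT : N ∈ T m := by
    rw [hNdef, hsetD]
    exact Nat.sSup_mem (hTne m) (hTfin m).bddAbove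
  obtain ⟨a, ⟨j1, hj1, rfl⟩, b, ⟨j2, hj2, rfl⟩, hab2⟩ := hNT
  have hNle : (N : ℝ) ≤ 4 * δ + 1 := by
    rw [← hab2, ← wordDist_mul_left j1⁻¹ (j1 * m) (j2 * m)]
    have : j1⁻¹ * (j1 * m) = m := by group
    rw [this]
    have : j1⁻¹ * (j2 * m) = (j1⁻¹ * j2) * m := by group
    rw [this]
    exact key _ (H.mul_mem (H.inv_mem hj1) hj2)
  have hrN : r ≤ N := Nat.sInf_le ⟨m, rfl⟩
  have : (r : ℝ) ≤ 4 * δ + 1 := le_trans (Nat.cast_le.mpr hrN) hNle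
  linarith
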